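/- For any d ≥ 2 and any (possibly randomized) stopping rule τ for the noise-free linear prophet problem, there exist deterministic feature vectors x_1,...,x_n ∈ R^d (with x_i the i-th standard basis vector for i ≤ d and x_i = 0 for i > d) and a parameter θ ∈ R^d with nonnegative entries such that E[x_τᵀθ] / max_{i∈[n]} x_iᵀθ ≤ 1/d. The construction: since Σ_{i=1}^d P(τ = i) ≤ 1, there exists a coordinate i* ≤ d with P(τ = i*) ≤ 1/d; choosing θ to concentrate its mass on coordinate i* (with the preceding coordinates geometrically smaller by a factor ε → 0) forces the ratio to at most 1/d. -/

import Mathlib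

open MeasureTheory ProbabilityTheory Finset

/-!
Let `p θ j` be the probability of stopping at stage `j` under `θ`. Non-anticipation makes
`p θ j` depend only on `θ 1, …, θ j`, and `∑_{j ≤ d} p θ j ≤ 1`. Suppose every nonnegative `θ`
supported on `{1, …, k}` with `θ k > 0` earned more than `θ k / d`. Then `θ` can be built stage
by stage with `∑_{j ≤ k} p θ j > k / d`: if this holds with slack `E`, put at stage `k + 1` a
weight `t` so large that the reward collected before is at most `t E`; the reward bound for the
new `θ` then forces `p θ (k + 1) > 1 / d - E`. At `k = d` this contradicts `∑ p ≤ 1`. The choice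
of `t` from the current slack replaces the paper's limit `ε → 0`.
-/

theorem Finset.le_ciSup₂_of_mem {ι α : Type*} [ConditionallyCompleteLattice α] {s : Finset ι}
    {f : ι → α} {i : ι} (hi : i ∈ s) : f i ≤ ⨆ j ∈ s, f j :=
  le_ciSup₂ (f := fun j (_ : j ∈ s) => f j) ((s.finite_toSet.image f).bddAbove.mono <|
    Set.iUnion_subset fun _ => Set.range_subset_iff.2 fun hj => Set.mem_image_of_mem f hj) i hi

theorem integral_comp_eq_sum {Ω : Type*} [MeasurableSpace Ω] {μ : Measure Ω} [IsFiniteMeasure μ]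
    {τ : Ω → ℕ} (hτ : Measurable τ) {g : ℕ → ℝ} {s : Finset ℕ} (hg : ∀ j ∉ s, g j = 0) :
    ∫ ω, g (τ ω) ∂μ = ∑ j ∈ s, g j * μ.real {ω | τ ω = j} := by
  have hfib : ∀ j, MeasurableSet {ω | τ ω = j} := fun j => hτ (measurableSet_singleton j)
  have hsum : (fun ω => g (τ ω)) =
      fun ω => ∑ j ∈ s, {ω | τ ω = j}.indicator (fun _ => g j) ω := by
    funext ω
    simp only [Set.indicator_apply, Set.mem_ofPred_eq, sum_ite_eq]
    split_ifs with h
    · rfl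
    · exact hg _ h
  rw [hsum, integral_finsetSum _ fun j _ => (integrable_const (g j)).indicator (hfib j)]
  refine sum_congr rfl fun j _ => ?_
  rw [integral_indicator_const _ (hfib j), smul_eq_mul, mul_comm]

theorem update_succ_eq_zero_of_notMem_Icc {θ : ℕ → ℝ} {k : ℕ} (hθ : ∀ j ∉ Icc 1 k, θ j = 0)
    (t : ℝ) : ∀ j ∉ Icc 1 (k + 1), Function.update θ (k + 1) t j = 0 := by
  intro j hj
  rw [mem_Icc] at hj
  rw [Function.update_of_ne (by omega)]
  exact hθ j (by rw [mem_Icc]; omega)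

def NonAnticipating (p : (ℕ → ℝ) → ℕ → ℝ) : Prop :=
  ∀ θ θ' : ℕ → ℝ, ∀ j, (∀ i ≤ j, θ i = θ' i) → p θ j = p θ' j

namespace NonAnticipating

variable {p : (ℕ → ℝ) → ℕ → ℝ}

theorem mul_self (hp : NonAnticipating p) : NonAnticipating fun θ j => θ j * p θ j :=
  fun θ θ' j h => by
    show θ j * p θ j = θ' j * p θ' j
    rw [h j le_rfl, hp θ θ' j h]

theorem sum_Icc_succ_update (hp : NonAnticipating p) (θ : ℕ → ℝ) (k : ℕ) (t : ℝ) :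
    ∑ j ∈ Icc 1 (k + 1), p (Function.update θ (k + 1) t) j =
      ∑ j ∈ Icc 1 k, p θ j + p (Function.update θ (k + 1) t) (k + 1) := by
  rw [sum_Icc_succ_top (Nat.le_add_left 1 k)]
  congr 1
  refine sum_congr rfl fun j hj => hp _ _ j fun i hi => Function.update_of_ne ?_ t θ
  have := (mem_Icc.1 hj).2
  omega

variable {c : ℝ} {m : ℕ}

theorem mul_lt_add_of_update (hp : NonAnticipating p) {k : ℕ}
    (hbad : ∀ θ : ℕ → ℝ, 0 ≤ θ → (∀ j ∉ Icc 1 (k + 1), θ j = 0) → 0 < θ (k + 1) →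
      c * θ (k + 1) < ∑ j ∈ Icc 1 (k + 1), θ j * p θ j)
    {θ : ℕ → ℝ} (hθ0 : 0 ≤ θ) (hθ : ∀ j ∉ Icc 1 k, θ j = 0) {t : ℝ} (ht : 0 < t) :
    c * t < ∑ j ∈ Icc 1 k, θ j * p θ j + t * p (Function.update θ (k + 1) t) (k + 1) := by
  have h := hbad _ (le_update_iff.2 ⟨ht.le, fun j _ => hθ0 j⟩)
    (update_succ_eq_zero_of_notMem_Icc hθ t) (by simpa using ht)
  rwa [hp.mul_self.sum_Icc_succ_update, Function.update_self] at h

theorem exists_lt_sum_of_forall_lt (hp : NonAnticipating p) (hm : 1 ≤ m)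
    (hbad : ∀ θ : ℕ → ℝ, ∀ k ∈ Icc 1 m, 0 ≤ θ → (∀ j ∉ Icc 1 k, θ j = 0) → 0 < θ k →
      c * θ k < ∑ j ∈ Icc 1 k, θ j * p θ j) :
    ∃ θ : ℕ → ℝ, 0 ≤ θ ∧ (∀ j ∉ Icc 1 m, θ j = 0) ∧ m * c < ∑ j ∈ Icc 1 m, p θ j := by
  induction m, hm using Nat.le_induction with
  | base =>
    have h := hp.mul_lt_add_of_update (fun θ => hbad θ 1 (by simp)) (θ := 0) le_rfl
      (fun _ _ => rfl) one_pos
    refine ⟨_, le_update_iff.2 ⟨zero_le_one, fun _ _ => le_rfl⟩,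
      update_succ_eq_zero_of_notMem_Icc (θ := 0) (k := 0) (fun _ _ => rfl) 1, ?_⟩
    rw [hp.sum_Icc_succ_update]
    simpa using h
  | succ k hk ih =>
    obtain ⟨θ, hθ0, hθ, hS⟩ := ih fun θ i hi => hbad θ i (by simp at hi ⊢; omega)
    set R := ∑ j ∈ Icc 1 k, θ j * p θ j
    set E := ∑ j ∈ Icc 1 k, p θ j - k * c
    have hE : 0 < E := by linarith
    set t := max 1 (R / E)
    have ht : 0 < t := lt_max_of_lt_left one_pos
    have hRt : R ≤ t * E := by rw [← div_le_iff₀ hE]; exact le_max_right _ _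
    have h := hp.mul_lt_add_of_update (fun θ => hbad θ (k + 1) (by simp)) hθ0 hθ ht
    have hq : c < E + p (Function.update θ (k + 1) t) (k + 1) := by
      refine lt_of_mul_lt_mul_left ?_ ht.le
      rw [mul_add]
      linarith
    refine ⟨_, le_update_iff.2 ⟨ht.le, fun j _ => hθ0 j⟩,
      update_succ_eq_zero_of_notMem_Icc hθ t, ?_⟩
    rw [hp.sum_Icc_succ_update]
    push_cast
    linarith

theorem exists_sum_mul_le (hp : NonAnticipating p) (hm : 1 ≤ m)
    (hsum : ∀ θ, ∑ j ∈ Icc 1 m, p θ j ≤ m * c) :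
    ∃ θ : ℕ → ℝ, ∃ k ∈ Icc 1 m, 0 ≤ θ ∧ (∀ j ∉ Icc 1 k, θ j = 0) ∧ 0 < θ k ∧
      ∑ j ∈ Icc 1 k, θ j * p θ j ≤ c * θ k := by
  by_contra! hbad
  obtain ⟨θ, -, -, hS⟩ := hp.exists_lt_sum_of_forall_lt hm hbad
  exact (hsum θ).not_gt hS

end NonAnticipating

theorem stmt_12_general {Ω : Type*} [MeasureSpace Ω] [IsProbabilityMeasure (ℙ : Measure Ω)]
    (d n : ℕ) (hd : 2 ≤ d) (hn : d ≤ n)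
    (τ : (ℕ → ℝ) → Ω → ℕ)
    (hτmeas : ∀ θ, Measurable (τ θ))
    -- non-anticipation: the stopping decision at stage i depends on θ only through θ 1,...,θ i
    (hadapt : ∀ i : ℕ, ∀ θ θ' : ℕ → ℝ, (∀ j ≤ i, θ j = θ' j) →
      ∀ ω, (τ θ ω = i ↔ τ θ' ω = i)) :
    ∃ θ : ℕ → ℝ,
      (∀ j, 0 ≤ θ j) ∧
      (∀ j, j ∉ Finset.Icc 1 d → θ j = 0) ∧
      (0 < ⨆ i ∈ Finset.Icc 1 n, (if i ≤ d then θ i else 0)) ∧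
      (∫ ω, (if τ θ ω ≤ d then θ (τ θ ω) else 0) ∂ℙ)
        ≤ (1 / d) * ⨆ i ∈ Finset.Icc 1 n, (if i ≤ d then θ i else 0) := by
  set p : (ℕ → ℝ) → ℕ → ℝ := fun θ j => (ℙ : Measure Ω).real {ω | τ θ ω = j}
  have hp : NonAnticipating p := fun θ θ' j h => by
    simp only [p, Set.ext fun ω => hadapt j θ θ' h ω]
  have hsum : ∀ θ, ∑ j ∈ Icc 1 d, p θ j ≤ d * (1 / d) := fun θ => by
    rw [mul_one_div_cancel (by positivity)]
    exact (sum_measureReal_preimage_singleton _ fun j _ =>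
      hτmeas θ (measurableSet_singleton j)).trans_le measureReal_le_one
  obtain ⟨θ, k, hk, hθ0, hθ, hθk, hR⟩ := hp.exists_sum_mul_le (by omega) hsum
  rw [mem_Icc] at hk
  set g : ℕ → ℝ := fun i => if i ≤ d then θ i else 0
  have hmax : θ k ≤ ⨆ i ∈ Icc 1 n, g i := by
    simpa [g, hk.2] using le_ciSup₂_of_mem (f := g) (mem_Icc.2 ⟨hk.1, hk.2.trans hn⟩)
  refine ⟨θ, hθ0, fun j hj => hθ j fun hj' => hj ?_, hθk.trans_le hmax, ?_⟩
  · exact Icc_subset_Icc_right hk.2 hj'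
  calc ∫ ω, g (τ θ ω) ∂ℙ = ∑ j ∈ Icc 1 k, g j * p θ j :=
        integral_comp_eq_sum (hτmeas θ) fun j hj => by simp [g, hθ j hj]
    _ = ∑ j ∈ Icc 1 k, θ j * p θ j :=
        sum_congr rfl fun j hj => by simp [g, ((mem_Icc.1 hj).2.trans hk.2)]
    _ ≤ 1 / d * θ k := hR
    _ ≤ 1 / d * ⨆ i ∈ Icc 1 n, g i := by gcongr

/-- Noise-free linear prophet lower bound. Features are deterministic:
`x_i = e_i` (the `i`-th standard basis vector) for stages `i ∈ {1,...,d}` and `x_i = 0` for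
`i > d`, so the reward at stage `i ≤ d` is the coordinate `θ i` and the reward at later
stages is `0`. A (possibly randomized) stopping rule is a family `τ θ : Ω → ℕ` which may
depend on the unknown parameter `θ` only through the observed rewards: the decision
`{τ θ = i}` depends only on `θ 1, ..., θ i` (non-anticipation). Then, for any such rule,
there exists a nonnegative parameter `θ` supported on `{1,...,d}` with positive maximal
reward such that `E[x_τᵀθ] ≤ (1/d) · max_{i∈[n]} x_iᵀθ`. -/
theorem stmt_12 {Ω : Type*} [MeasureSpace Ω] [IsProbabilityMeasure (ℙ : Measure Ω)]
    (d n : ℕ) (hd : 2 ≤ d) (hn : d ≤ n)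
    (τ : (ℕ → ℝ) → Ω → ℕ)
    (hτmeas : ∀ θ, Measurable (τ θ))
    (hτrange : ∀ θ ω, τ θ ω ∈ Finset.Icc 1 (n + 1))
    -- non-anticipation: the stopping decision at stage i depends on θ only through θ 1,...,θ i
    (hadapt : ∀ i : ℕ, ∀ θ θ' : ℕ → ℝ, (∀ j ≤ i, θ j = θ' j) →
      ∀ ω, (τ θ ω = i ↔ τ θ' ω = i)) :
    ∃ θ : ℕ → ℝ,
      (∀ j, 0 ≤ θ j) ∧
      (∀ j, j ∉ Finset.Icc 1 d → θ j = 0) ∧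
      (0 < ⨆ i ∈ Finset.Icc 1 n, (if i ≤ d then θ i else 0)) ∧
      (∫ ω, (if τ θ ω ≤ d then θ (τ θ ω) else 0) ∂ℙ)
        ≤ (1 / d) * ⨆ i ∈ Finset.Icc 1 n, (if i ≤ d then θ i else 0) :=
  stmt_12_general d n hd hn τ hτmeas hadapt
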